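/- arXiv:math/0611505 — 2 statements merged into one kernel-verified Lean document; each statement's English description precedes it below -/
import Mathlib

section
/- For every α ∈ (0,1) there exists a finite constant C = C(α) such that for all natural numbers ℓ and L the following holds. Under the Bernoulli product measure ν_α on {0,1}^ℤ, set Z = −(1/α)·Σ_{x=1}^{ℓ} η̄(x) and let W = max(0, ⌊L + Z⌋) (an integer-valued random variable depending only on the coordinates η(1),…,η(ℓ)). Then E_{ν_α}[(Σ_{x=ℓ+1}^{ℓ+W} η̄(x))²] ≤ C·(L + √ℓ + 1). (With ℓ of order N and L of order √N this is the estimate E[(N^{-1/2} Σ_{x=1+v_tN}^{a√N−1+v_tN+Z^N} η̄(x))²] = O(N^{−1/2}) used in the proof of the initial-configuration dependence of the tagged particle.) -/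
open MeasureTheory ProbabilityTheory

section Aux

variable {Ω : Type*} [MeasurableSpace Ω] {μ : Measure Ω}

private lemma bdd_integrable [IsFiniteMeasure μ] {f : Ω → ℝ} (hf : Measurable f) {C : ℝ}
    (h : ∀ ω, |f ω| ≤ C) : Integrable f μ :=
  (integrable_const C).mono' hf.aestronglyMeasurable
    (Filter.Eventually.of_forall fun ω => by simpa [Real.norm_eq_abs] using h ω)

private lemma sq_sum_int_le [IsProbabilityMeasure μ] (n : ℕ) (f : ℕ → Ω → ℝ) (d : ℕ → ℝ)
    (hm : ∀ i, Measurable (f i)) (hb : ∀ i ω, |f i ω| ≤ 1)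
    (horth : ∀ i j : ℕ, i ≠ j → ∫ ω, f i ω * f j ω ∂μ = 0)
    (hdiag : ∀ i, ∫ ω, f i ω * f i ω ∂μ ≤ d i) :
    ∫ ω, (∑ i ∈ Finset.range n, f i ω) ^ 2 ∂μ ≤ ∑ i ∈ Finset.range n, d i := by
  have hint : ∀ i j : ℕ, Integrable (fun ω => f i ω * f j ω) μ := by
    intro i j
    refine bdd_integrable ((hm i).mul (hm j)) (C := 1) fun ω => ?_
    rw [abs_mul]
    exact mul_le_one₀ (hb i ω) (abs_nonneg _) (hb j ω)
  have h1 : ∀ ω, (∑ i ∈ Finset.range n, f i ω) ^ 2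
      = ∑ i ∈ Finset.range n, ∑ j ∈ Finset.range n, f i ω * f j ω := by
    intro ω; rw [sq, Finset.sum_mul_sum]
  calc ∫ ω, (∑ i ∈ Finset.range n, f i ω) ^ 2 ∂μ
      = ∑ i ∈ Finset.range n, ∑ j ∈ Finset.range n, ∫ ω, f i ω * f j ω ∂μ := by
        simp_rw [h1]
        rw [integral_finset_sum _ fun i _ => integrable_finset_sum _ fun j _ => hint i j]
        exact Finset.sum_congr rfl fun i _ => integral_finset_sum _ fun j _ => hint i j
    _ = ∑ i ∈ Finset.range n, ∫ ω, f i ω * f i ω ∂μ :=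
        Finset.sum_congr rfl fun i hi =>
          Finset.sum_eq_single_of_mem i hi fun j _ hji => horth i j (Ne.symm hji)
    _ ≤ ∑ i ∈ Finset.range n, d i := Finset.sum_le_sum fun i _ => hdiag i

private lemma bool_mean_zero [IsProbabilityMeasure μ] {α : ℝ} (hα0 : 0 ≤ α) (f : Ω → Bool)
    (hf : Measurable f) (hl : μ {ω | f ω = true} = ENNReal.ofReal α) :
    ∫ ω, ((if f ω then (1 : ℝ) else 0) - α) ∂μ = 0 := by
  have hmeasset : MeasurableSet {ω | f ω = true} := hf (measurableSet_singleton true)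
  have hind : (fun ω => if f ω then (1 : ℝ) else 0)
      = Set.indicator {ω | f ω = true} (fun _ => (1 : ℝ)) := by
    funext ω; by_cases h : f ω <;> simp [Set.indicator_apply, h]
  have hii : Integrable (fun ω => if f ω then (1 : ℝ) else 0) μ := by
    refine bdd_integrable ?_ (C := 1) fun ω => by split <;> simp
    exact Measurable.comp (f := f) (g := fun b => if b then (1 : ℝ) else 0)
      Measurable.of_discrete hf
  rw [integral_sub hii (integrable_const α), hind, integral_indicator_const _ hmeasset, measureReal_def, hl,
    integral_const]
  simp [ENNReal.toReal_ofReal hα0]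

end Aux

/-- Under the Bernoulli(α) product measure (i.i.d. Bernoulli(α) coordinates `η x`), with
`Z = −(1/α)·Σ_{x=1}^{ℓ} η̄(x)` and `W = max(0, ⌊L + Z⌋)`, one has
`E[(Σ_{x=ℓ+1}^{ℓ+W} η̄(x))²] ≤ C(α)·(L + √ℓ + 1)`. -/
theorem random_endpoint_sum_bound (α : ℝ) (hα : α ∈ Set.Ioo (0 : ℝ) 1)
    {Ω : Type*} [MeasurableSpace Ω] (μ : Measure Ω) [IsProbabilityMeasure μ]
    (η : ℤ → Ω → Bool) (hmeas : ∀ x, Measurable (η x))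
    (hindep : iIndepFun η μ)
    (hlaw : ∀ x, μ {ω | η x ω = true} = ENNReal.ofReal α) :
    ∃ C : ℝ, ∀ ℓ L : ℕ,
      ∀ Z : Ω → ℝ, Z = (fun ω => -(1 / α) * ∑ i ∈ Finset.range ℓ,
          ((if η ((i : ℤ) + 1) ω then (1 : ℝ) else 0) - α)) →
      ∀ W : Ω → ℕ, W = (fun ω => (⌊(L : ℝ) + Z ω⌋).toNat) →
      ∫ ω, (∑ i ∈ Finset.range (W ω),
            ((if η ((ℓ : ℤ) + 1 + i) ω then (1 : ℝ) else 0) - α)) ^ 2 ∂μ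
        ≤ C * ((L : ℝ) + Real.sqrt ℓ + 1) := by
  obtain ⟨hα0, hα1⟩ := hα
  refine ⟨1 + 1 / α, fun ℓ L Z hZ W hW => ?_⟩
  classical
  -- basic facts about the coordinates
  have hzero : ∀ x : ℤ, ∫ ω, ((if η x ω then (1 : ℝ) else 0) - α) ∂μ = 0 := fun x =>
    bool_mean_zero hα0.le (η x) (hmeas x) (hlaw x)
  have hgm : Measurable (fun b : Bool => (if b then (1 : ℝ) else 0) - α) :=
    Measurable.of_discrete
  have hcm : ∀ x : ℤ, Measurable (fun ω => (if η x ω then (1 : ℝ) else 0) - α) := fun x =>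
    hgm.comp (hmeas x)
  have hcb : ∀ (x : ℤ) ω, |(if η x ω then (1 : ℝ) else 0) - α| ≤ 1 := by
    intro x ω
    rw [abs_le]
    constructor <;> split <;> linarith
  have hpair : ∀ x y : ℤ, x ≠ y →
      ∫ ω, ((if η x ω then (1 : ℝ) else 0) - α) * ((if η y ω then (1 : ℝ) else 0) - α) ∂μ = 0 := by
    intro x y hxy
    have h := IndepFun.integral_mul_eq_mul_integral ((hindep.indepFun hxy).comp hgm hgm)
      ((hgm.comp (hmeas x)).aestronglyMeasurable) ((hgm.comp (hmeas y)).aestronglyMeasurable)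
    have e0 : ∫ ω, ((if η x ω then (1 : ℝ) else 0) - α) ∂μ = 0 := hzero x
    calc ∫ ω, ((if η x ω then (1 : ℝ) else 0) - α) * ((if η y ω then (1 : ℝ) else 0) - α) ∂μ
        = (∫ ω, ((if η x ω then (1 : ℝ) else 0) - α) ∂μ)
          * ∫ ω, ((if η y ω then (1 : ℝ) else 0) - α) ∂μ := h
      _ = 0 := by rw [e0, zero_mul]
  -- abbreviations
  set X : ℕ → Ω → ℝ := fun i ω => (if η ((ℓ : ℤ) + 1 + i) ω then (1 : ℝ) else 0) - α with hX
  set I : ℕ → Ω → ℝ := fun n ω => if n < W ω then (1 : ℝ) else 0 with hI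
  set M := L + ℓ with hM
  have hXm : ∀ i, Measurable (X i) := fun i => hcm _
  have hXb : ∀ i ω, |X i ω| ≤ 1 := fun i ω => hcb _ ω
  have hZm : Measurable Z := by
    rw [hZ]
    exact measurable_const.mul (Finset.measurable_sum _ fun k _ => hcm _)
  have hWm : Measurable W := by
    rw [hW]
    exact Measurable.comp (g := Int.toNat) Measurable.of_discrete
      ((measurable_const.add hZm).floor)
  have hIm : ∀ n, Measurable (I n) := fun n =>
    Measurable.comp (f := W) (g := fun m => if n < m then (1 : ℝ) else 0)
      Measurable.of_discrete hWm
  have hIb : ∀ n ω, 0 ≤ I n ω ∧ I n ω ≤ 1 := by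
    intro n ω
    rw [hI]
    constructor <;> dsimp only <;> split <;> norm_num
  -- upper bound on Z and W
  have hZub : ∀ ω, Z ω ≤ ℓ := by
    intro ω
    rw [hZ]
    dsimp only
    have h1 : -∑ k ∈ Finset.range ℓ, ((if η ((k : ℤ) + 1) ω then (1 : ℝ) else 0) - α)
        ≤ ℓ * α := by
      rw [← Finset.sum_neg_distrib]
      calc ∑ k ∈ Finset.range ℓ, -((if η ((k : ℤ) + 1) ω then (1 : ℝ) else 0) - α)
          ≤ ∑ _k ∈ Finset.range ℓ, α :=
            Finset.sum_le_sum fun k _ => by split <;> linarith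
        _ = ℓ * α := by rw [Finset.sum_const, Finset.card_range, nsmul_eq_mul]
    have h2 : -(1 / α) * ∑ k ∈ Finset.range ℓ, ((if η ((k : ℤ) + 1) ω then (1 : ℝ) else 0) - α)
        = (1 / α) * -∑ k ∈ Finset.range ℓ, ((if η ((k : ℤ) + 1) ω then (1 : ℝ) else 0) - α) := by
      ring
    rw [h2]
    calc (1 / α) * -∑ k ∈ Finset.range ℓ, ((if η ((k : ℤ) + 1) ω then (1 : ℝ) else 0) - α)
        ≤ (1 / α) * (ℓ * α) := by
          exact mul_le_mul_of_nonneg_left h1 (by positivity)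
      _ = ℓ := by field_simp
  have hWleM : ∀ ω, W ω ≤ M := by
    intro ω
    rw [hW]
    dsimp only
    rw [Int.toNat_le]
    calc ⌊(L : ℝ) + Z ω⌋ ≤ ⌊((M : ℕ) : ℝ)⌋ := by
          apply Int.floor_le_floor
          have := hZub ω
          rw [hM]; push_cast; linarith
      _ = (M : ℤ) := Int.floor_natCast M
  -- rewrite the random sum with indicators
  have hrep : ∀ ω, (∑ i ∈ Finset.range (W ω), X i ω) = ∑ i ∈ Finset.range M, I i ω * X i ω := by
    intro ω
    have e1 : ∑ i ∈ Finset.range M, I i ω * X i ω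
        = ∑ i ∈ Finset.range M, (if i < W ω then X i ω else 0) :=
      Finset.sum_congr rfl fun i _ => by rw [hI]; dsimp only; split <;> simp
    have e2 : ∑ i ∈ Finset.range (W ω), (if i < W ω then X i ω else 0)
        = ∑ i ∈ Finset.range M, (if i < W ω then X i ω else 0) :=
      Finset.sum_subset (Finset.range_subset_range.mpr (hWleM ω))
        (fun x _ hnx => if_neg (by simpa using hnx))
    rw [e1, ← e2]
    exact Finset.sum_congr rfl fun i hi => (if_pos (Finset.mem_range.mp hi)).symm
  -- the key orthogonality via independence
  have horthM : ∀ i j : ℕ, i ≠ j → ∫ ω, (I i ω * X i ω) * (I j ω * X j ω) ∂μ = 0 := by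
    intro i j hij
    set xi : ℤ := (ℓ : ℤ) + 1 + i with hxi
    set xj : ℤ := (ℓ : ℤ) + 1 + j with hxj
    set T : Finset ℤ := insert xj ((Finset.range ℓ).image (fun k : ℕ => (k : ℤ) + 1)) with hT
    have hmemT : ∀ k ∈ Finset.range ℓ, ((k : ℤ) + 1) ∈ T := by
      intro k hk
      rw [hT]
      exact Finset.mem_insert_of_mem (Finset.mem_image_of_mem _ hk)
    have hxjT : xj ∈ T := Finset.mem_insert_self _ _
    have hxiT : xi ∉ T := by
      intro hmem
      rw [hT, Finset.mem_insert] at hmem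
      rcases hmem with h | h
      · rw [hxi, hxj] at h
        exact hij (by omega)
      · rw [Finset.mem_image] at h
        obtain ⟨k, hk, hke⟩ := h
        rw [Finset.mem_range] at hk
        rw [hxi] at hke
        omega
    have hdisj : Disjoint ({xi} : Finset ℤ) T := Finset.disjoint_singleton_left.mpr hxiT
    have hbase := hindep.indepFun_finset {xi} T hdisj hmeas
    set u : (∀ _ : (T : Finset ℤ), Bool) → ℤ → Bool :=
      fun v z => if h : z ∈ T then v ⟨z, h⟩ else false with hu
    set g1 : (∀ _ : ({xi} : Finset ℤ), Bool) → ℝ :=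
      fun v => (if v ⟨xi, Finset.mem_singleton_self xi⟩ then (1 : ℝ) else 0) - α with hg1
    set g2 : (∀ _ : (T : Finset ℤ), Bool) → ℝ := fun v =>
      (if i < (⌊(L : ℝ) + -(1 / α) * ∑ k ∈ Finset.range ℓ,
          ((if u v ((k : ℤ) + 1) then (1 : ℝ) else 0) - α)⌋).toNat then (1 : ℝ) else 0) *
      ((if j < (⌊(L : ℝ) + -(1 / α) * ∑ k ∈ Finset.range ℓ,
          ((if u v ((k : ℤ) + 1) then (1 : ℝ) else 0) - α)⌋).toNat then (1 : ℝ) else 0) *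
       ((if u v xj then (1 : ℝ) else 0) - α)) with hg2
    have hcomp := hbase.comp (φ := g1) (ψ := g2) Measurable.of_discrete Measurable.of_discrete
    have he1 : (g1 ∘ fun ω (a : ({xi} : Finset ℤ)) => η a ω) = X i := rfl
    have he2 : (g2 ∘ fun ω (a : (T : Finset ℤ)) => η a ω)
        = fun ω => I i ω * (I j ω * X j ω) := by
      funext ω
      have huval : ∀ z (hz : z ∈ T), u (fun a : (T : Finset ℤ) => η a ω) z = η z ω :=
        fun z hz => dif_pos hz
      show g2 (fun a => η a ω) = _
      rw [hg2]
      dsimp only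
      have hsum : ∑ k ∈ Finset.range ℓ,
          ((if u (fun a : (T : Finset ℤ) => η a ω) ((k : ℤ) + 1) then (1 : ℝ) else 0) - α)
          = ∑ k ∈ Finset.range ℓ, ((if η ((k : ℤ) + 1) ω then (1 : ℝ) else 0) - α) :=
        Finset.sum_congr rfl fun k hk => by rw [huval _ (hmemT k hk)]
      rw [hsum, huval xj hxjT, hI, hW, hZ]
    rw [he1, he2] at hcomp
    have hGm : Measurable fun ω => I i ω * (I j ω * X j ω) :=
      (hIm i).mul ((hIm j).mul (hXm j))
    have hmul := IndepFun.integral_mul_eq_mul_integral hcomp (hXm i).aestronglyMeasurable hGm.aestronglyMeasurable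
    have e0 : ∫ ω, X i ω ∂μ = 0 := hzero xi
    calc ∫ ω, (I i ω * X i ω) * (I j ω * X j ω) ∂μ
        = ∫ ω, X i ω * (I i ω * (I j ω * X j ω)) ∂μ :=
          integral_congr_ae (Filter.Eventually.of_forall fun ω => by ring)
      _ = (∫ ω, X i ω ∂μ) * ∫ ω, I i ω * (I j ω * X j ω) ∂μ := hmul
      _ = 0 := by rw [e0, zero_mul]
  -- apply the expansion bound
  have hIint : ∀ n, Integrable (I n) μ := fun n =>
    bdd_integrable (hIm n) (C := 1) fun ω => by
      rw [abs_le]; exact ⟨by linarith [(hIb n ω).1], (hIb n ω).2⟩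
  have hmain : ∫ ω, (∑ i ∈ Finset.range M, I i ω * X i ω) ^ 2 ∂μ
      ≤ ∑ i ∈ Finset.range M, ∫ ω, I i ω ∂μ := by
    refine sq_sum_int_le M (fun i ω => I i ω * X i ω) (fun i => ∫ ω, I i ω ∂μ)
      (fun i => (hIm i).mul (hXm i)) (fun i ω => ?_) horthM (fun i => ?_)
    · rw [abs_mul]
      refine mul_le_one₀ ?_ (abs_nonneg _) (hXb i ω)
      rw [abs_le]; exact ⟨by linarith [(hIb i ω).1], (hIb i ω).2⟩
    · have hfi : Integrable (fun ω => (I i ω * X i ω) * (I i ω * X i ω)) μ := by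
        refine bdd_integrable (((hIm i).mul (hXm i)).mul ((hIm i).mul (hXm i))) (C := 1)
          fun ω => ?_
        have h1 : |I i ω| ≤ 1 := by
          rw [abs_le]; exact ⟨by linarith [(hIb i ω).1], (hIb i ω).2⟩
        rw [abs_mul, abs_mul]
        exact mul_le_one₀ (mul_le_one₀ h1 (abs_nonneg _) (hXb i ω)) (by positivity)
          (mul_le_one₀ h1 (abs_nonneg _) (hXb i ω))
      refine integral_mono hfi (hIint i) fun ω => ?_
      rcases hIb i ω with ⟨h0, h1⟩
      have hx := abs_le.mp (hXb i ω)
      have hII : I i ω * I i ω ≤ I i ω := by nlinarith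
      have hx2 : X i ω * X i ω ≤ 1 := by nlinarith
      show I i ω * X i ω * (I i ω * X i ω) ≤ I i ω
      calc I i ω * X i ω * (I i ω * X i ω) = (I i ω * I i ω) * (X i ω * X i ω) := by ring
        _ ≤ (I i ω * I i ω) * 1 := by
            exact mul_le_mul_of_nonneg_left hx2 (mul_nonneg h0 h0)
        _ = I i ω * I i ω := mul_one _
        _ ≤ I i ω := hII
  -- sum of indicator integrals = E[W]
  have hWint : Integrable (fun ω => (W ω : ℝ)) μ := by
    refine bdd_integrable (Measurable.comp (g := fun n : ℕ => (n : ℝ))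
      Measurable.of_discrete hWm) (C := (M : ℝ)) fun ω => ?_
    rw [abs_of_nonneg (Nat.cast_nonneg _)]
    exact_mod_cast hWleM ω
  have hsumI : ∑ i ∈ Finset.range M, ∫ ω, I i ω ∂μ = ∫ ω, (W ω : ℝ) ∂μ := by
    rw [← integral_finset_sum _ fun i _ => hIint i]
    refine integral_congr_ae (Filter.Eventually.of_forall fun ω => ?_)
    have e2 : ∑ i ∈ Finset.range (W ω), (if i < W ω then (1 : ℝ) else 0)
        = ∑ i ∈ Finset.range M, (if i < W ω then (1 : ℝ) else 0) :=
      Finset.sum_subset (Finset.range_subset_range.mpr (hWleM ω))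
        (fun x _ hnx => if_neg (by simpa using hnx))
    calc ∑ i ∈ Finset.range M, I i ω = ∑ i ∈ Finset.range M, (if i < W ω then (1 : ℝ) else 0) :=
          rfl
      _ = ∑ i ∈ Finset.range (W ω), (if i < W ω then (1 : ℝ) else 0) := e2.symm
      _ = ∑ _i ∈ Finset.range (W ω), (1 : ℝ) :=
          Finset.sum_congr rfl fun i hi => if_pos (Finset.mem_range.mp hi)
      _ = (W ω : ℝ) := by simp
  -- second moment of Z
  set s : ℝ := Real.sqrt ℓ / α with hs
  have hs0 : 0 ≤ s := div_nonneg (Real.sqrt_nonneg _) hα0.le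
  have hs2 : s ^ 2 = (ℓ : ℝ) / α ^ 2 := by
    rw [hs, div_pow, Real.sq_sqrt (Nat.cast_nonneg ℓ)]
  have hZabs : ∀ ω, |Z ω| ≤ (1 / α) * ℓ := by
    intro ω
    rw [hZ]
    dsimp only
    rw [abs_mul, abs_neg, abs_of_nonneg (by positivity : (0:ℝ) ≤ 1 / α)]
    refine mul_le_mul_of_nonneg_left ?_ (by positivity)
    calc |∑ k ∈ Finset.range ℓ, ((if η ((k : ℤ) + 1) ω then (1 : ℝ) else 0) - α)|
        ≤ ∑ k ∈ Finset.range ℓ, |(if η ((k : ℤ) + 1) ω then (1 : ℝ) else 0) - α| :=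
          Finset.abs_sum_le_sum_abs _ _
      _ ≤ ∑ _k ∈ Finset.range ℓ, (1 : ℝ) := Finset.sum_le_sum fun k _ => hcb _ ω
      _ = ℓ := by simp
  have hZ2int : Integrable (fun ω => Z ω ^ 2) μ := by
    refine bdd_integrable (hZm.pow_const 2) (C := ((1 / α) * ℓ) ^ 2) fun ω => ?_
    rw [abs_of_nonneg (sq_nonneg _), ← sq_abs]
    exact pow_le_pow_left₀ (abs_nonneg _) (hZabs ω) 2
  have hZ2 : ∫ ω, Z ω ^ 2 ∂μ ≤ s ^ 2 := by
    have hySum : ∫ ω, (∑ k ∈ Finset.range ℓ,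
        ((if η ((k : ℤ) + 1) ω then (1 : ℝ) else 0) - α)) ^ 2 ∂μ ≤ (ℓ : ℝ) := by
      have := sq_sum_int_le (μ := μ) ℓ
        (fun k ω => (if η ((k : ℤ) + 1) ω then (1 : ℝ) else 0) - α) (fun _ => (1 : ℝ))
        (fun k => hcm _) (fun k ω => hcb _ ω)
        (fun k m hkm => hpair _ _ (by omega))
        (fun k => ?_)
      · simpa using this
      · show ∫ ω, ((if η ((k : ℤ) + 1) ω then (1 : ℝ) else 0) - α)
            * ((if η ((k : ℤ) + 1) ω then (1 : ℝ) else 0) - α) ∂μ ≤ (1 : ℝ)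
        have hmono : ∫ ω, ((if η ((k : ℤ) + 1) ω then (1 : ℝ) else 0) - α)
            * ((if η ((k : ℤ) + 1) ω then (1 : ℝ) else 0) - α) ∂μ ≤ ∫ (_ : Ω), (1 : ℝ) ∂μ := by
          refine integral_mono (bdd_integrable ((hcm _).mul (hcm _)) (C := 1) fun ω => ?_)
            (integrable_const 1) fun ω => ?_
          · rw [abs_mul]
            exact mul_le_one₀ (hcb _ ω) (abs_nonneg _) (hcb _ ω)
          · have := abs_le.mp (hcb ((k : ℤ) + 1) ω)
            nlinarith
        simpa using hmono
    have e1 : ∀ ω, Z ω ^ 2 = (1 / α) ^ 2 * (∑ k ∈ Finset.range ℓ,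
        ((if η ((k : ℤ) + 1) ω then (1 : ℝ) else 0) - α)) ^ 2 := by
      intro ω; rw [hZ]; dsimp only; ring
    calc ∫ ω, Z ω ^ 2 ∂μ
        = (1 / α) ^ 2 * ∫ ω, (∑ k ∈ Finset.range ℓ,
            ((if η ((k : ℤ) + 1) ω then (1 : ℝ) else 0) - α)) ^ 2 ∂μ := by
          rw [← integral_const_mul]
          exact integral_congr_ae (Filter.Eventually.of_forall e1)
      _ ≤ (1 / α) ^ 2 * ℓ := mul_le_mul_of_nonneg_left hySum (by positivity)
      _ = s ^ 2 := by rw [hs2]; field_simp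
  -- pointwise bound on W
  have hptwise : ∀ ω, (W ω : ℝ) ≤ (L : ℝ) + (Z ω ^ 2 + s ^ 2) / (2 * s) := by
    intro ω
    rcases Nat.eq_zero_or_pos ℓ with hℓ | hℓ
    · have hZ0 : Z ω = 0 := by rw [hZ]; subst hℓ; simp
      have hW0 : (W ω : ℝ) = L := by
        rw [hW]; dsimp only; rw [hZ0]; push_cast; simp
      have hs0' : s = 0 := by rw [hs]; subst hℓ; simp
      rw [hW0, hZ0, hs0']
      simp
    · have hspos : 0 < s := by
        rw [hs]
        exact div_pos (Real.sqrt_pos.mpr (by exact_mod_cast hℓ)) hα0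
      have h1 : (W ω : ℝ) ≤ max 0 ((L : ℝ) + Z ω) := by
        rw [hW]
        dsimp only
        rcases le_or_gt 0 ⌊(L : ℝ) + Z ω⌋ with h | h
        · refine le_max_of_le_right ?_
          have : ((⌊(L : ℝ) + Z ω⌋.toNat : ℤ) : ℝ) = ((⌊(L : ℝ) + Z ω⌋ : ℤ) : ℝ) := by
            exact_mod_cast congrArg (fun n : ℤ => (n : ℝ)) (Int.toNat_of_nonneg h)
          rw [show ((⌊(L : ℝ) + Z ω⌋.toNat : ℕ) : ℝ) = ((⌊(L : ℝ) + Z ω⌋.toNat : ℤ) : ℝ) by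
            push_cast; ring, this]
          exact Int.floor_le _
        · rw [Int.toNat_of_nonpos h.le]
          exact le_max_of_le_left (by norm_num)
      have h2 : max 0 ((L : ℝ) + Z ω) ≤ (L : ℝ) + |Z ω| :=
        max_le (by positivity) (add_le_add_right (le_abs_self _) _)
      have h3 : |Z ω| ≤ (Z ω ^ 2 + s ^ 2) / (2 * s) := by
        rw [le_div_iff₀ (by positivity)]
        nlinarith [sq_nonneg (|Z ω| - s), sq_abs (Z ω)]
      linarith
  -- integrate the pointwise bound
  have hMint : Integrable (fun ω => (L : ℝ) + (Z ω ^ 2 + s ^ 2) / (2 * s)) μ :=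
    (integrable_const _).add ((hZ2int.add (integrable_const _)).div_const _)
  have hWbound : ∫ ω, (W ω : ℝ) ∂μ ≤ (L : ℝ) + s := by
    have step1 : ∫ ω, (W ω : ℝ) ∂μ ≤ ∫ ω, ((L : ℝ) + (Z ω ^ 2 + s ^ 2) / (2 * s)) ∂μ :=
      integral_mono hWint hMint hptwise
    have hg' : Integrable (fun ω => (Z ω ^ 2 + s ^ 2) / (2 * s)) μ :=
      (hZ2int.add (integrable_const _)).div_const _
    have step2 : ∫ ω, ((L : ℝ) + (Z ω ^ 2 + s ^ 2) / (2 * s)) ∂μ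
        = (L : ℝ) + ((∫ ω, Z ω ^ 2 ∂μ) + s ^ 2) / (2 * s) := by
      rw [integral_add (integrable_const _) hg', integral_const, probReal_univ]
      simp only [ENNReal.toReal_one, one_smul]
      congr 1
      rw [integral_div, integral_add hZ2int (integrable_const _), integral_const, probReal_univ]
      simp
    have step3 : ((∫ ω, Z ω ^ 2 ∂μ) + s ^ 2) / (2 * s) ≤ s := by
      rcases eq_or_lt_of_le hs0 with h | h
      · have hz0 : ∫ ω, Z ω ^ 2 ∂μ = 0 := by
          have hnn : 0 ≤ ∫ ω, Z ω ^ 2 ∂μ := integral_nonneg fun ω => sq_nonneg _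
          have : ∫ ω, Z ω ^ 2 ∂μ ≤ 0 := by rw [← h] at hZ2; simpa using hZ2
          linarith
        rw [hz0, ← h]
        simp
      · rw [div_le_iff₀ (by positivity)]
        nlinarith [hZ2]
    linarith
  -- final assembly
  have hfinal : (L : ℝ) + s ≤ (1 + 1 / α) * ((L : ℝ) + Real.sqrt ℓ + 1) := by
    have hinv1 : (1 : ℝ) ≤ 1 / α := by
      rw [le_div_iff₀ hα0]; linarith
    have hL0 : (0 : ℝ) ≤ L := Nat.cast_nonneg _
    have hsq0 : (0 : ℝ) ≤ Real.sqrt ℓ := Real.sqrt_nonneg _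
    have hs_eq : s = (1 / α) * Real.sqrt ℓ := by rw [hs]; ring
    rw [hs_eq]
    nlinarith [mul_nonneg (by linarith : (0:ℝ) ≤ 1 / α) hL0]
  calc ∫ ω, (∑ i ∈ Finset.range (W ω),
        ((if η ((ℓ : ℤ) + 1 + i) ω then (1 : ℝ) else 0) - α)) ^ 2 ∂μ
      = ∫ ω, (∑ i ∈ Finset.range M, I i ω * X i ω) ^ 2 ∂μ :=
        integral_congr_ae (Filter.Eventually.of_forall fun ω => congrArg (· ^ 2) (hrep ω))
    _ ≤ ∑ i ∈ Finset.range M, ∫ ω, I i ω ∂μ := hmain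
    _ = ∫ ω, (W ω : ℝ) ∂μ := hsumI
    _ ≤ (L : ℝ) + s := hWbound
    _ ≤ (1 + 1 / α) * ((L : ℝ) + Real.sqrt ℓ + 1) := hfinal
end

section
/- Fix α ∈ (0,1), v > 0 and t > 0. For each integer n ≥ 1 let G_n : ℝ → ℝ be given by G_n(u) = (1 − u/n) for 0 ≤ u ≤ n and G_n(u) = 0 otherwise. Then lim_{n→∞} sup_{N≥1} E_{ν_α}[( N^{−1/2} Σ_{x∈ℤ} (G_n(x/N + vt) − G_n(x/N))·η̄(x) − N^{−1/2} Σ_{x=−⌊vtN⌋}^{−1} η̄(x) )²] = 0; that is, uniformly in N, the difference Y₀^N(T_tG_n) − Y₀^N(G_n) of the initial fluctuation field tested against the shifted and unshifted ramp functions approximates in L²(ν_α) the normalized centered number of particles in the interval [−vtN, −1]. -/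
open MeasureTheory ProbabilityTheory

/-- The ramp function `G_n(u) = (1 − u/n)`for `0 ≤ u ≤ n`, `0` otherwise. -/
noncomputable def rampG (n : ℕ) (u : ℝ) : ℝ :=
  if 0 ≤ u ∧ u ≤ n then 1 - u / n else 0

lemma rampG_neg {n : ℕ} {u : ℝ} (h : u < 0) : rampG n u = 0 :=
  if_neg fun hc => absurd hc.1 (not_le.mpr h)

lemma rampG_gt {n : ℕ} {u : ℝ} (h : (n : ℝ) < u) : rampG n u = 0 :=
  if_neg fun hc => absurd hc.2 (not_le.mpr h)

lemma rampG_of {n : ℕ} {u : ℝ} (h1 : 0 ≤ u) (h2 : u ≤ n) : rampG n u = 1 - u / n :=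
  if_pos ⟨h1, h2⟩

/-- Centered Bernoulli variable. -/
noncomputable def etaBar {Ω : Type*} (α : ℝ) (η : ℤ → Ω → Bool) (x : ℤ) (ω : Ω) : ℝ :=
  (if η x ω then (1 : ℝ) else 0) - α

/-- The coefficient of `η̄ x` in the combined sum. -/
noncomputable def coefD (n N : ℕ) (v t : ℝ) (x : ℤ) : ℝ :=
  (rampG n ((x : ℝ) / N + v * t) - rampG n ((x : ℝ) / N)) - (if x < 0 then 1 else 0)

lemma sq_sum_second_moment {Ω : Type*} [MeasurableSpace Ω] (μ : Measure Ω)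
    [IsProbabilityMeasure μ]
    (s : Finset ℤ) (d : ℤ → ℝ) (f : ℤ → Ω → ℝ)
    (hmeas : ∀ x, Measurable (f x))
    (hbdd : ∀ x ω, |f x ω| ≤ 1)
    (hzero : ∀ x, ∫ ω, f x ω ∂μ = 0)
    (hind : ∀ x y, x ≠ y →
      ∫ ω, f x ω * f y ω ∂μ = (∫ ω, f x ω ∂μ) * ∫ ω, f y ω ∂μ) :
    ∫ ω, (∑ x ∈ s, d x * f x ω) ^ 2 ∂μ ≤ ∑ x ∈ s, d x ^ 2 := by
  have hint : ∀ x y : ℤ, Integrable (fun ω => f x ω * f y ω) μ := by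
    intro x y
    refine (integrable_const (1 : ℝ)).mono'
      (((hmeas x).mul (hmeas y)).aestronglyMeasurable) ?_
    filter_upwards with ω
    rw [Real.norm_eq_abs, abs_mul]
    calc |f x ω| * |f y ω| ≤ 1 * 1 :=
          mul_le_mul (hbdd x ω) (hbdd y ω) (abs_nonneg _) zero_le_one
      _ = 1 := one_mul 1
  have key : ∀ ω, (∑ x ∈ s, d x * f x ω) ^ 2
      = ∑ x ∈ s, ∑ y ∈ s, (d x * d y) * (f x ω * f y ω) := by
    intro ω
    rw [sq, Finset.sum_mul_sum]
    exact Finset.sum_congr rfl fun x _ => Finset.sum_congr rfl fun y _ => by ring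
  calc ∫ ω, (∑ x ∈ s, d x * f x ω) ^ 2 ∂μ
      = ∑ x ∈ s, ∑ y ∈ s, (d x * d y) * ∫ ω, f x ω * f y ω ∂μ := by
        simp_rw [key]
        rw [integral_finset_sum _ (fun x _ =>
          integrable_finset_sum _ (fun y _ => (hint x y).const_mul _))]
        exact Finset.sum_congr rfl fun x _ => by
          rw [integral_finset_sum _ (fun y _ => (hint x y).const_mul _)]
          exact Finset.sum_congr rfl fun y _ => integral_const_mul _ _
    _ = ∑ x ∈ s, (d x * d x) * ∫ ω, f x ω * f x ω ∂μ := by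
        refine Finset.sum_congr rfl fun x hx => ?_
        refine Finset.sum_eq_single_of_mem x hx fun y hy hyx => ?_
        rw [hind x y fun h => hyx h.symm, hzero x, hzero y]
        ring
    _ ≤ ∑ x ∈ s, d x ^ 2 := by
        refine Finset.sum_le_sum fun x _ => ?_
        have h1 : ∫ ω, f x ω * f x ω ∂μ ≤ 1 := by
          calc ∫ ω, f x ω * f x ω ∂μ ≤ ∫ _ω, (1 : ℝ) ∂μ := by
                refine integral_mono (hint x x) (integrable_const 1) fun ω => ?_
                have h2 := abs_le.mp (hbdd x ω)
                nlinarith [h2.1, h2.2]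
            _ = 1 := by simp
        have h0 : 0 ≤ ∫ ω, f x ω * f x ω ∂μ :=
          integral_nonneg fun ω => mul_self_nonneg _
        nlinarith [sq_nonneg (d x)]


set_option maxHeartbeats 1000000 in
/-- Uniformly in `N ≥ 1`, the difference `Y₀^N(T_tG_n) − Y₀^N(G_n)` of the initial
fluctuation field tested against shifted and unshifted ramps approximates in `L²(ν_α)` the
normalized centered number of particles in `[−vtN, −1]`, as `n → ∞`.  Formalized with
i.i.d. Bernoulli(α) coordinates `η x` and the `ε`–`n₀` form of the iterated limit. -/
theorem ramp_approximation_of_interval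
    {Ω : Type*} [MeasurableSpace Ω] (μ : Measure Ω) [IsProbabilityMeasure μ]
    (α : ℝ) (hα : α ∈ Set.Ioo (0 : ℝ) 1) (v t : ℝ) (hv : 0 < v) (ht : 0 < t)
    (η : ℤ → Ω → Bool) (hmeas : ∀ x, Measurable (η x))
    (hindep : iIndepFun η μ)
    (hlaw : ∀ x, μ {ω | η x ω = true} = ENNReal.ofReal α) :
    ∀ ε : ℝ, 0 < ε → ∃ n₀ : ℕ, ∀ n : ℕ, n₀ ≤ n → ∀ N : ℕ, 1 ≤ N →
      ∫ ω,
        ((1 / Real.sqrt N) * ∑' x : ℤ,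
            (rampG n ((x : ℝ) / N + v * t) - rampG n ((x : ℝ) / N))
              * ((if η x ω then (1 : ℝ) else 0) - α)
          - (1 / Real.sqrt N) * ∑ i ∈ Finset.range (⌊v * t * N⌋.toNat),
              ((if η (-(i : ℤ) - 1) ω then (1 : ℝ) else 0) - α)) ^ 2 ∂μ
        ≤ ε := by
  obtain ⟨hα0, hα1⟩ := hα
  intro ε hε
  refine ⟨max (⌈v * t⌉₊ + 1) (⌈3 * (v * t) ^ 2 / ε⌉₊ + 1), fun n hn N hN => ?_⟩
  have h1' : ⌈v * t⌉₊ + 1 ≤ n := le_trans (le_max_left _ _) hn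
  have h2' : ⌈3 * (v * t) ^ 2 / ε⌉₊ + 1 ≤ n := le_trans (le_max_right _ _) hn
  have hn1 : 1 ≤ n := by omega
  have hnR : (0 : ℝ) < n := by exact_mod_cast Nat.lt_of_lt_of_le Nat.zero_lt_one hn1
  have hnvt : v * t ≤ (n : ℝ) :=
    le_trans (Nat.le_ceil _) (by exact_mod_cast (by omega : ⌈v * t⌉₊ ≤ n))
  have hnε : 3 * (v * t) ^ 2 / ε ≤ (n : ℝ) :=
    le_trans (Nat.le_ceil _) (by exact_mod_cast (by omega : ⌈3 * (v * t) ^ 2 / ε⌉₊ ≤ n))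
  have hNR : (0 : ℝ) < N := by exact_mod_cast Nat.lt_of_lt_of_le Nat.zero_lt_one hN
  have hN1R : (1 : ℝ) ≤ N := by exact_mod_cast hN
  have hvt : 0 < v * t := mul_pos hv ht
  set m : ℕ := (⌊v * t * (N : ℝ)⌋).toNat with hmdef
  have hvtN : (0 : ℝ) ≤ v * t * N := by positivity
  have hmval : ((m : ℤ) : ℝ) = (⌊v * t * (N : ℝ)⌋ : ℝ) := by
    rw [hmdef, Int.toNat_of_nonneg (Int.floor_nonneg.mpr hvtN)]
  have hm1 : (m : ℝ) ≤ v * t * N := by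
    have := Int.floor_le (v * t * (N : ℝ))
    push_cast at hmval ⊢
    linarith [hmval ▸ this]
  have hm2 : v * t * (N : ℝ) < m + 1 := by
    have := Int.lt_floor_add_one (v * t * (N : ℝ))
    push_cast at hmval ⊢
    linarith [hmval ▸ this]
  set s : Finset ℤ := Finset.Icc (-(m : ℤ)) ((n : ℤ) * N) with hsdef
  -- properties of etaBar
  have hgmeas : Measurable (fun b : Bool => (if b then (1 : ℝ) else 0) - α) :=
    measurable_of_countable _
  have hfmeas : ∀ x, Measurable (etaBar α η x) := fun x => hgmeas.comp (hmeas x)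
  have hfbdd : ∀ x ω, |etaBar α η x ω| ≤ 1 := by
    intro x ω
    rw [etaBar, abs_le]
    by_cases h : η x ω <;> simp [h] <;> constructor <;> linarith
  have hfzero : ∀ x, ∫ ω, etaBar α η x ω ∂μ = 0 := by
    intro x
    have hset : MeasurableSet {ω | η x ω = true} := (hmeas x) (measurableSet_singleton true)
    have hind : (fun ω => (if η x ω then (1 : ℝ) else 0))
        = Set.indicator {ω | η x ω = true} (fun _ => 1) := by
      ext ω; by_cases h : η x ω = true <;> simp [Set.indicator, h]
    have hInt : Integrable (fun ω => (if η x ω then (1 : ℝ) else 0)) μ := by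
      rw [hind]; exact (integrable_const 1).indicator hset
    have heq : ∫ ω, etaBar α η x ω ∂μ
        = (∫ ω, (if η x ω then (1 : ℝ) else 0) ∂μ) - ∫ _ω, α ∂μ := by
      rw [← integral_sub hInt (integrable_const α)]; rfl
    rw [heq, hind, integral_indicator_const (1 : ℝ) hset, measureReal_def, hlaw x, integral_const]
    simp [ENNReal.toReal_ofReal hα0.le]
  have hfind : ∀ x y, x ≠ y → ∫ ω, etaBar α η x ω * etaBar α η y ω ∂μ
      = (∫ ω, etaBar α η x ω ∂μ) * ∫ ω, etaBar α η y ω ∂μ := by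
    intro x y hxy
    have h1 : IndepFun (etaBar α η x) (etaBar α η y) μ :=
      (hindep.indepFun hxy).comp hgmeas hgmeas
    exact h1.integral_mul_eq_mul_integral (hfmeas x).aestronglyMeasurable (hfmeas y).aestronglyMeasurable
  -- vanishing of the ramp coefficient off s
  have hc0 : ∀ x : ℤ, x ∉ s →
      rampG n ((x : ℝ) / N + v * t) - rampG n ((x : ℝ) / N) = 0 := by
    intro x hx
    rw [hsdef, Finset.mem_Icc, not_and_or, not_le, not_le] at hx
    rcases hx with h | h
    · have hx1 : (x : ℝ) ≤ -(m : ℝ) - 1 := by exact_mod_cast (by omega : x ≤ -(m : ℤ) - 1)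
      have hm0 : (0 : ℝ) ≤ (m : ℝ) := Nat.cast_nonneg m
      have hu1 : (x : ℝ) / N < 0 := div_neg_of_neg_of_pos (by linarith) hNR
      have hu2 : (x : ℝ) / N + v * t < 0 := by
        have hnum : (x : ℝ) + v * t * N < 0 := by linarith
        have heq2 : (x : ℝ) / N + v * t = ((x : ℝ) + v * t * N) / N := by field_simp
        rw [heq2]; exact div_neg_of_neg_of_pos hnum hNR
      rw [rampG_neg hu2, rampG_neg hu1, sub_zero]
    · have hx1 : (n : ℝ) * N < (x : ℝ) := by exact_mod_cast h
      have hu1 : (n : ℝ) < (x : ℝ) / N := (lt_div_iff₀ hNR).mpr (by linarith)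
      have hu2 : (n : ℝ) < (x : ℝ) / N + v * t := by linarith
      rw [rampG_gt hu2, rampG_gt hu1, sub_zero]
  -- bound on the coefficients
  have hdb : ∀ x ∈ s, |coefD n N v t x| ≤ v * t / n := by
    intro x hx
    rw [hsdef, Finset.mem_Icc] at hx
    obtain ⟨hxl, hxr⟩ := hx
    by_cases hx0 : x < 0
    · have hxR : (x : ℝ) < 0 := by exact_mod_cast hx0
      have hu1 : (x : ℝ) / N < 0 := div_neg_of_neg_of_pos hxR hNR
      have hge : -(m : ℝ) ≤ (x : ℝ) := by exact_mod_cast hxl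
      have h2 : (0 : ℝ) ≤ (x : ℝ) / N + v * t := by
        have hnum : (0 : ℝ) ≤ (x : ℝ) + v * t * N := by linarith
        have heq2 : (x : ℝ) / N + v * t = ((x : ℝ) + v * t * N) / N := by field_simp
        rw [heq2]; exact div_nonneg hnum hNR.le
      have h3 : (x : ℝ) / N + v * t ≤ n := by linarith
      have hdx : coefD n N v t x = -(((x : ℝ) / N + v * t) / n) := by
        rw [coefD, rampG_of h2 h3, rampG_neg hu1, if_pos hx0]; ring
      rw [hdx, abs_neg, abs_of_nonneg (div_nonneg h2 hnR.le)]
      rw [div_le_div_iff_of_pos_right hnR]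
      linarith
    · push_neg at hx0
      have hxR : (0 : ℝ) ≤ (x : ℝ) := by exact_mod_cast hx0
      have hu0 : (0 : ℝ) ≤ (x : ℝ) / N := div_nonneg hxR hNR.le
      have hdx : coefD n N v t x
          = rampG n ((x : ℝ) / N + v * t) - rampG n ((x : ℝ) / N) := by
        rw [coefD, if_neg (not_lt.mpr hx0)]; ring
      by_cases hun : (x : ℝ) / N ≤ n
      · by_cases hun2 : (x : ℝ) / N + v * t ≤ n
        · have h5 : coefD n N v t x = -(v * t / n) := by
            rw [hdx, rampG_of (by linarith) hun2, rampG_of hu0 hun]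
            field_simp
            ring
          rw [h5, abs_neg, abs_of_nonneg (by positivity)]
        · push_neg at hun2
          have h5 : coefD n N v t x = -(1 - (x : ℝ) / N / n) := by
            rw [hdx, rampG_gt hun2, rampG_of hu0 hun]; ring
          have h6 : (x : ℝ) / N / n ≤ 1 := by rw [div_le_one hnR]; exact hun
          rw [h5, abs_neg, abs_of_nonneg (by linarith)]
          have heq2 : 1 - (x : ℝ) / N / n = ((n : ℝ) - (x : ℝ) / N) / n := by
            field_simp
          rw [heq2, div_le_div_iff_of_pos_right hnR]
          linarith
      · push_neg at hun
        have h5 : coefD n N v t x = 0 := by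
          rw [hdx, rampG_gt (by linarith), rampG_gt hun, sub_zero]
        rw [h5, abs_zero]; positivity
  -- pointwise identification of the integrand
  have hpoint : ∀ ω,
      ((1 / Real.sqrt N) * ∑' x : ℤ,
            (rampG n ((x : ℝ) / N + v * t) - rampG n ((x : ℝ) / N))
              * ((if η x ω then (1 : ℝ) else 0) - α)
          - (1 / Real.sqrt N) * ∑ i ∈ Finset.range m,
              ((if η (-(i : ℤ) - 1) ω then (1 : ℝ) else 0) - α)) ^ 2
        = (N : ℝ)⁻¹ * (∑ x ∈ s, coefD n N v t x * etaBar α η x ω) ^ 2 := by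
    intro ω
    have h1 : (∑' x : ℤ,
        (rampG n ((x : ℝ) / N + v * t) - rampG n ((x : ℝ) / N))
          * ((if η x ω then (1 : ℝ) else 0) - α))
        = ∑ x ∈ s, (rampG n ((x : ℝ) / N + v * t) - rampG n ((x : ℝ) / N))
            * etaBar α η x ω := by
      apply tsum_eq_sum
      intro x hx
      rw [hc0 x hx, zero_mul]
    have himg : Finset.Icc (-(m : ℤ)) (-1) = (Finset.range m).image (fun i : ℕ => -(i : ℤ) - 1) := by
      ext a
      simp only [Finset.mem_Icc, Finset.mem_image, Finset.mem_range]
      constructor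
      · intro ⟨ha1, ha2⟩
        exact ⟨(-1 - a).toNat, by omega, by omega⟩
      · rintro ⟨i, hi, rfl⟩
        omega
    have hfilt : s.filter (fun x => x < 0) = Finset.Icc (-(m : ℤ)) (-1) := by
      have hnN : (0 : ℤ) ≤ (n : ℤ) * N := by positivity
      ext a
      rw [Finset.mem_filter, hsdef, Finset.mem_Icc, Finset.mem_Icc]
      omega
    have h2 : (∑ i ∈ Finset.range m, ((if η (-(i : ℤ) - 1) ω then (1 : ℝ) else 0) - α))
        = ∑ x ∈ s, (if x < 0 then (1 : ℝ) else 0) * etaBar α η x ω := by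
      rw [show (∑ x ∈ s, (if x < 0 then (1 : ℝ) else 0) * etaBar α η x ω)
          = ∑ x ∈ s, (if x < 0 then etaBar α η x ω else 0) from
        Finset.sum_congr rfl fun x _ => by rw [ite_mul, one_mul, zero_mul]]
      rw [← Finset.sum_filter, hfilt, himg, Finset.sum_image (by intro i _ j _ h; have h' : -(i : ℤ) - 1 = -(j : ℤ) - 1 := h; omega)]
      rfl
    have h3 : (∑ x ∈ s, coefD n N v t x * etaBar α η x ω)
        = (∑ x ∈ s, (rampG n ((x : ℝ) / N + v * t) - rampG n ((x : ℝ) / N))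
            * etaBar α η x ω)
          - ∑ x ∈ s, (if x < 0 then (1 : ℝ) else 0) * etaBar α η x ω := by
      rw [← Finset.sum_sub_distrib]
      exact Finset.sum_congr rfl fun x _ => by rw [coefD]; ring
    rw [h1, h2, ← mul_sub, ← h3, mul_pow]
    congr 1
    rw [div_pow, one_pow, Real.sq_sqrt hNR.le, one_div]
  -- main estimate
  rw [integral_congr_ae (ae_of_all _ hpoint), integral_const_mul]
  have hn1R : (1 : ℝ) ≤ (n : ℝ) := by exact_mod_cast hn1
  have hcard : (s.card : ℝ) ≤ 3 * (n : ℝ) * N := by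
    have h4 : s.card = n * N + m + 1 := by
      rw [hsdef, Int.card_Icc]
      rw [show ((n : ℤ) * N + 1 - -(m : ℤ)) = ((n * N + m + 1 : ℕ) : ℤ) by push_cast; ring]
      exact Int.toNat_natCast _
    have h5 : (s.card : ℝ) = (n : ℝ) * N + m + 1 := by rw [h4]; push_cast; ring
    have e1 : v * t * N ≤ (n : ℝ) * N := mul_le_mul_of_nonneg_right hnvt hNR.le
    have e2 : (1 : ℝ) ≤ (n : ℝ) * N := by nlinarith
    rw [h5]
    linarith
  have hsum : ∑ x ∈ s, coefD n N v t x ^ 2 ≤ (s.card : ℝ) * (v * t / n) ^ 2 := by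
    have := Finset.sum_le_card_nsmul s (fun x => coefD n N v t x ^ 2) ((v * t / n) ^ 2)
      (fun x hx => by
        calc coefD n N v t x ^ 2 = |coefD n N v t x| ^ 2 := (sq_abs _).symm
          _ ≤ (v * t / n) ^ 2 := by
              have h := hdb x hx
              have := abs_nonneg (coefD n N v t x)
              nlinarith)
    rwa [nsmul_eq_mul] at this
  calc (N : ℝ)⁻¹ * ∫ ω, (∑ x ∈ s, coefD n N v t x * etaBar α η x ω) ^ 2 ∂μ
      ≤ (N : ℝ)⁻¹ * ∑ x ∈ s, coefD n N v t x ^ 2 := by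
        apply mul_le_mul_of_nonneg_left _ (by positivity)
        exact sq_sum_second_moment μ s _ _ hfmeas hfbdd hfzero hfind
    _ ≤ (N : ℝ)⁻¹ * ((3 * (n : ℝ) * N) * (v * t / n) ^ 2) := by
        apply mul_le_mul_of_nonneg_left _ (by positivity)
        calc ∑ x ∈ s, coefD n N v t x ^ 2 ≤ (s.card : ℝ) * (v * t / n) ^ 2 := hsum
          _ ≤ (3 * (n : ℝ) * N) * (v * t / n) ^ 2 := by
              apply mul_le_mul_of_nonneg_right hcard (by positivity)
    _ = 3 * (v * t) ^ 2 / n := by field_simp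
    _ ≤ ε := by
        rw [div_le_iff₀ hnR]
        have h7 := (div_le_iff₀ hε).mp hnε
        nlinarith
end
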